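/- arXiv:2509.06808 — 2 statements merged into one kernel-verified Lean document; each statement's English description precedes it below -/
import Mathlib

section
/- Let G be a finite simple graph with Ore-degree θ(G) ≤ 7 such that G admits no strong edge-coloring with 13 colors but every proper subgraph of G admits a strong edge-coloring with 13 colors. Then every vertex of degree 4 in G is adjacent to at most two vertices of degree 2. -/
/-- Two edges `e` and `f` of a graph `G` *see* each other if they are contained in a
common path or cycle of length at most three, i.e. they share an endpoint or some
endpoint of `e` is adjacent to some endpoint of `f`. -/
def SimpleGraph.Sees {V : Type*} (G : SimpleGraph V) (e f : Sym2 V) : Prop :=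
  ∃ u ∈ e, ∃ v ∈ f, u = v ∨ G.Adj u v

/-- `c` is a strong edge-coloring of `G`: edges that see each other get distinct colors. -/
def SimpleGraph.IsStrongEdgeColoring {V α : Type*} (G : SimpleGraph V) (c : Sym2 V → α) : Prop :=
  ∀ e ∈ G.edgeSet, ∀ f ∈ G.edgeSet, e ≠ f → G.Sees e f → c e ≠ c f

/-- `G` admits a strong edge-coloring with `n` colors. -/
def SimpleGraph.HasStrongColoring {V : Type*} (G : SimpleGraph V) (n : ℕ) : Prop :=
  ∃ c : Sym2 V → Fin n, G.IsStrongEdgeColoring c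

/-
Take a vertex `v` of degree 4 with three neighbours of degree 2, one of them `u`, whose other
neighbour is `w`. By minimality, `G` minus the two edges at `u` has a strong 13-edge-coloring, and
we extend it greedily, first to `uw` and then to `vu`. Removing all edges at `u` matters: no two
remaining edges see each other only through `u`. By the Ore-degree bound (`deg w ≤ 5`, and every
neighbour of `w` has degree at most `7 - deg w`), `uw` sees at most
`(deg w - 1) + 3 + (deg w - 1)(6 - deg w) ≤ 12` coloured edges; since two more neighbours of `v`
have degree 2, `vu` then sees at most `3 + 1 + (1 + 1 + 2) + 4 = 12`.
-/

open Finset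

namespace SimpleGraph

variable {V W α : Type*} {G : SimpleGraph V}

theorem Sees.symm {e f : Sym2 V} (h : G.Sees e f) : G.Sees f e := by
  obtain ⟨p, hp, q, hq, hpq⟩ := h
  exact ⟨q, hq, p, hp, hpq.imp Eq.symm Adj.symm⟩

theorem Sees.map {G' : SimpleGraph W} (φ : G →g G') {e f : Sym2 V} (h : G.Sees e f) :
    G'.Sees (e.map φ) (f.map φ) := by
  obtain ⟨p, hp, q, hq, hpq⟩ := h
  exact ⟨φ p, Sym2.mem_map.2 ⟨p, hp, rfl⟩, φ q, Sym2.mem_map.2 ⟨q, hq, rfl⟩,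
    hpq.imp (congrArg φ) φ.map_adj⟩

theorem HasStrongColoring.of_embedding {G' : SimpleGraph W} {n : ℕ} (φ : G ↪g G')
    (h : G'.HasStrongColoring n) : G.HasStrongColoring n := by
  obtain ⟨c, hc⟩ := h
  exact ⟨c ∘ Sym2.map φ, fun e he f hf hne hs =>
    hc _ (φ.toHom.map_mem_edgeSet he) _ (φ.toHom.map_mem_edgeSet hf)
      ((Sym2.map.injective φ.injective).ne hne) (hs.map φ.toHom)⟩

variable (G) in
def IsStrongEdgeColoringOn (F : Set (Sym2 V)) (c : Sym2 V → α) : Prop :=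
  ∀ e ∈ F, ∀ f ∈ F, e ≠ f → G.Sees e f → c e ≠ c f

theorem IsStrongEdgeColoringOn.mono {F F' : Set (Sym2 V)} {c : Sym2 V → α}
    (hc : G.IsStrongEdgeColoringOn F c) (hF : F' ⊆ F) : G.IsStrongEdgeColoringOn F' c :=
  fun e he f hf => hc e (hF he) f (hF hf)

theorem IsStrongEdgeColoringOn.exists_insert {n : ℕ} {F : Set (Sym2 V)} {c : Sym2 V → Fin n}
    (hc : G.IsStrongEdgeColoringOn F c) (e : Sym2 V) (T : Finset (Sym2 V))
    (hT : ∀ f ∈ F, f ≠ e → G.Sees e f → f ∈ T) (hn : #T < n) :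
    ∃ c' : Sym2 V → Fin n, G.IsStrongEdgeColoringOn (insert e F) c' := by
  classical
  obtain ⟨k, -, hk⟩ := exists_mem_notMem_of_card_lt_card
    (s := T.image c) (t := univ) (card_image_le.trans_lt (by simpa using hn))
  have hfree : ∀ f ∈ F, f ≠ e → G.Sees e f → c f ≠ k := fun f hf hfe hs hck =>
    hk (hck ▸ mem_image_of_mem c (hT f hf hfe hs))
  refine ⟨Function.update c e k, ?_⟩
  rintro x hx y hy hxy hs
  rcases eq_or_ne x e with rfl | hxe
  · have hye : y ≠ x := hxy.symm
    simpa [hye] using (hfree y (hy.resolve_left hye) hye hs).symm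
  rcases eq_or_ne y e with rfl | hye
  · simpa [hxe] using hfree x (hx.resolve_left hxe) hxe hs.symm
  · simpa [hxe, hye] using hc x (hx.resolve_left hxe) y (hy.resolve_left hye) hxy hs

theorem IsStrongEdgeColoring.isStrongEdgeColoringOn_sdiff_incidenceSet {u : V}
    {c : Sym2 V → α} (hc : (G.deleteIncidenceSet u).IsStrongEdgeColoring c) :
    G.IsStrongEdgeColoringOn (G.edgeSet \ G.incidenceSet u) c := by
  rintro e ⟨he, heu⟩ f ⟨hf, hfu⟩ hne ⟨p, hp, q, hq, hpq⟩
  refine hc e (by rw [edgeSet_deleteIncidenceSet]; exact ⟨he, heu⟩)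
    f (by rw [edgeSet_deleteIncidenceSet]; exact ⟨hf, hfu⟩) hne ⟨p, hp, q, hq, ?_⟩
  refine hpq.imp id fun hadj => deleteIncidenceSet_adj.2 ⟨hadj, ?_, ?_⟩
  · rintro rfl
    exact heu ⟨he, hp⟩
  · rintro rfl
    exact hfu ⟨hf, hq⟩

theorem exists_isStrongEdgeColoringOn_sdiff_incidenceSet {n : ℕ}
    (hmin : ∀ H : G.Subgraph, H ≠ ⊤ → H.coe.HasStrongColoring n) {u w : V} (huw : G.Adj u w) :
    ∃ c : Sym2 V → Fin n, G.IsStrongEdgeColoringOn (G.edgeSet \ G.incidenceSet u) c := by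
  set H := toSubgraph (G.deleteIncidenceSet u) (G.deleteIncidenceSet_le u)
  have hH : H ≠ ⊤ := by
    intro h
    have huw' : H.Adj u w := h ▸ huw
    exact (deleteIncidenceSet_adj.1 huw').2.1 rfl
  obtain ⟨c, hc⟩ := (hmin H hH).of_embedding
    (H.spanningCoeEquivCoeOfSpanning (toSubgraph.isSpanning _ _)).toEmbedding
  exact ⟨c, hc.isStrongEdgeColoringOn_sdiff_incidenceSet⟩


section Counting

variable [Fintype V] [DecidableEq V] [DecidableRel G.Adj]

theorem card_incidenceFinset_erase_of_adj {x y : V} (hxy : G.Adj x y) :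
    #((G.incidenceFinset x).erase s(x, y)) = G.degree x - 1 := by
  rw [card_erase_of_mem ((G.mem_incidenceFinset _ _).2 ((G.mem_incidenceSet _ _).2 hxy)),
    card_incidenceFinset_eq_degree]

variable (G) in
def farEdges (a b : V) : Finset (Sym2 V) :=
  ((G.neighborFinset a).erase b).biUnion fun x => (G.incidenceFinset x).erase s(a, x)

theorem card_farEdges_le (a b : V) :
    #(G.farEdges a b) ≤ ∑ x ∈ (G.neighborFinset a).erase b, (G.degree x - 1) := by
  refine card_biUnion_le.trans (sum_le_sum fun x hx => ?_)
  rw [Sym2.eq_swap, card_incidenceFinset_erase_of_adj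
    ((G.mem_neighborFinset a x).1 (mem_of_mem_erase hx)).symm]

theorem mem_farEdges_of_sees_left {a b q : V} {f : Sym2 V} (hf : f ∈ G.edgeSet)
    (hne : f ≠ s(a, b)) (hq : q ∈ f) (haq : a = q ∨ G.Adj a q) :
    f ∈ (G.incidenceFinset a).erase s(a, b) ∪ (G.incidenceFinset b).erase s(a, b) ∪
      G.farEdges a b := by
  have hinc : ∀ {x}, x ∈ f → f ∈ G.incidenceFinset x :=
    fun hx => (G.mem_incidenceFinset _ _).2 ⟨hf, hx⟩
  rcases haq with rfl | haq
  · exact mem_union_left _ (mem_union_left _ (mem_erase.2 ⟨hne, hinc hq⟩))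
  rcases eq_or_ne q b with rfl | hqb
  · exact mem_union_left _ (mem_union_right _ (mem_erase.2 ⟨hne, hinc hq⟩))
  rcases eq_or_ne f s(a, q) with rfl | hfq
  · exact mem_union_left _ (mem_union_left _ (mem_erase.2 ⟨hne, hinc (Sym2.mem_mk_left a q)⟩))
  · exact mem_union_right _ (mem_biUnion.2 ⟨q, mem_erase.2 ⟨hqb, (G.mem_neighborFinset a q).2 haq⟩,
      mem_erase.2 ⟨hfq, hinc hq⟩⟩)

theorem mem_of_sees {a b : V} {f : Sym2 V} (hf : f ∈ G.edgeSet) (hne : f ≠ s(a, b))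
    (hs : G.Sees s(a, b) f) :
    f ∈ (G.incidenceFinset a).erase s(a, b) ∪ (G.incidenceFinset b).erase s(a, b) ∪
      G.farEdges a b ∪ G.farEdges b a := by
  obtain ⟨p, hp, q, hq, hpq⟩ := hs
  rcases Sym2.mem_iff.1 hp with rfl | rfl
  · exact mem_union_left _ (mem_farEdges_of_sees_left hf hne hq hpq)
  · have h := mem_farEdges_of_sees_left hf (by rwa [Sym2.eq_swap]) hq hpq
    rw [Sym2.eq_swap] at h
    simp only [mem_union] at h ⊢
    tauto

theorem mem_of_sees_of_mem_sdiff_incidenceSet {a b : V} {f : Sym2 V}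
    (hf : f ∈ G.edgeSet \ G.incidenceSet a) (hne : f ≠ s(a, b)) (hs : G.Sees s(a, b) f) :
    f ∈ (G.incidenceFinset b).erase s(a, b) ∪ G.farEdges a b ∪ G.farEdges b a := by
  have h := mem_of_sees hf.1 hne hs
  have ha : f ∉ (G.incidenceFinset a).erase s(a, b) :=
    fun h' => hf.2 ((G.mem_incidenceFinset _ _).1 (mem_of_mem_erase h'))
  simp only [mem_union] at h ha ⊢
  tauto

theorem sum_degree_sub_one_le_of_adj {k : ℕ}
    (hθ : ∀ x y, G.Adj x y → G.degree x + G.degree y ≤ k) {a b : V} (hab : G.Adj a b) :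
    ∑ x ∈ (G.neighborFinset a).erase b, (G.degree x - 1) ≤
      (G.degree a - 1) * (k - G.degree a - 1) := by
  calc _ ≤ ∑ x ∈ (G.neighborFinset a).erase b, (k - G.degree a - 1) :=
        sum_le_sum fun x hx => by
          have := hθ a x ((G.mem_neighborFinset a x).1 (mem_of_mem_erase hx))
          omega
    _ = _ := by
      rw [sum_const, card_erase_of_mem ((G.mem_neighborFinset a b).2 hab),
        card_neighborFinset_eq_degree, smul_eq_mul]

theorem sum_degree_sub_one_le_of_adj_of_degree_two {k : ℕ}
    (hθ : ∀ x y, G.Adj x y → G.degree x + G.degree y ≤ k) {a b : V} (hab : G.Adj a b) :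
    ∑ x ∈ (G.neighborFinset a).erase b, (G.degree x - 1) ≤
      #(((G.neighborFinset a).erase b).filter (G.degree · = 2)) +
        (G.degree a - 1 - #(((G.neighborFinset a).erase b).filter (G.degree · = 2))) *
          (k - G.degree a - 1) := by
  set s := (G.neighborFinset a).erase b
  have hs : #s = G.degree a - 1 := by
    rw [card_erase_of_mem ((G.mem_neighborFinset a b).2 hab), card_neighborFinset_eq_degree]
  rw [← sum_filter_add_sum_filter_not s (G.degree · = 2), ← hs,
    ← card_filter_add_card_filter_not (s := s) (G.degree · = 2), Nat.add_sub_cancel_left]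
  gcongr
  · exact (sum_congr rfl fun x hx => by rw [(mem_filter.1 hx).2]).trans_le (by simp)
  · refine (sum_le_sum fun x hx => ?_).trans_eq (by rw [sum_const, smul_eq_mul])
    have := hθ a x ((G.mem_neighborFinset a x).1 (mem_of_mem_erase (mem_of_mem_filter x hx)))
    omega

theorem neighborFinset_erase_eq_singleton {u v w : V} (hu : G.degree u = 2) (huv : G.Adj u v)
    (huw : G.Adj u w) (hvw : v ≠ w) : (G.neighborFinset u).erase w = {v} := by
  refine (eq_of_subset_of_card_le (singleton_subset_iff.2 ?_) ?_).symm
  · exact mem_erase.2 ⟨hvw, (G.mem_neighborFinset u v).2 huv⟩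
  · rw [card_erase_of_mem ((G.mem_neighborFinset u w).2 huw), card_neighborFinset_eq_degree, hu,
      card_singleton]

theorem edgeSet_subset_insert_sdiff_incidenceSet {u v w : V}
    (hNu : (G.neighborFinset u).erase w = {v}) :
    G.edgeSet ⊆ insert s(v, u) (insert s(u, w) (G.edgeSet \ G.incidenceSet u)) := by
  intro f hf
  by_cases hfu : u ∈ f
  · obtain ⟨y, rfl⟩ := Sym2.mem_iff_exists.1 hfu
    rcases eq_or_ne y w with rfl | hyw
    · exact Or.inr (Or.inl rfl)
    · have hy : y ∈ (G.neighborFinset u).erase w :=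
        mem_erase.2 ⟨hyw, (G.mem_neighborFinset u y).2 hf⟩
      rw [hNu, mem_singleton] at hy
      exact Or.inl (hy ▸ Sym2.eq_swap)
  · exact Or.inr (Or.inr ⟨hf, fun h => hfu h.2⟩)

theorem card_seen_by_far_edge_le (hθ : ∀ x y, G.Adj x y → G.degree x + G.degree y ≤ 7)
    {u v w : V} (hu : G.degree u = 2) (huw : G.Adj u w) (hv : G.degree v = 4)
    (hNu : (G.neighborFinset u).erase w = {v}) :
    #((G.incidenceFinset w).erase s(u, w) ∪ G.farEdges u w ∪ G.farEdges w u) ≤ 12 := by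
  have hw : G.degree w ≤ 5 := by have := hθ u w huw; omega
  have h₁ := card_incidenceFinset_erase_of_adj huw.symm
  have h₂ : #(G.farEdges u w) ≤ 3 :=
    (card_farEdges_le u w).trans (by rw [hNu, sum_singleton, hv])
  have h₃ := (card_farEdges_le w u).trans (sum_degree_sub_one_le_of_adj hθ huw.symm)
  have hd : ∀ d ≤ 5, d - 1 + 3 + (d - 1) * (7 - d - 1) ≤ 12 := by decide
  rw [Sym2.eq_swap] at h₁
  calc _ ≤ #((G.incidenceFinset w).erase s(u, w)) + #(G.farEdges u w) + #(G.farEdges w u) :=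
        (card_union_le _ _).trans (Nat.add_le_add_right (card_union_le _ _) _)
    _ ≤ 12 := by have := hd _ hw; omega

theorem card_seen_by_near_edge_le (hθ : ∀ x y, G.Adj x y → G.degree x + G.degree y ≤ 7)
    {u v : V} (hu : G.degree u = 2) (hvu : G.Adj v u) (hv : G.degree v = 4)
    (htwo : 2 ≤ #(((G.neighborFinset v).erase u).filter (G.degree · = 2))) :
    #((G.incidenceFinset v).erase s(v, u) ∪ (G.incidenceFinset u).erase s(v, u) ∪
      G.farEdges v u ∪ G.farEdges u v) ≤ 12 := by
  have h₁ := card_incidenceFinset_erase_of_adj hvu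
  have h₂ := card_incidenceFinset_erase_of_adj hvu.symm
  have h₃ := (card_farEdges_le v u).trans (sum_degree_sub_one_le_of_adj_of_degree_two hθ hvu)
  have h₄ := (card_farEdges_le u v).trans (sum_degree_sub_one_le_of_adj hθ hvu.symm)
  have hle : #(((G.neighborFinset v).erase u).filter (G.degree · = 2)) ≤ 3 :=
    (card_filter_le _ _).trans (by
      rw [card_erase_of_mem ((G.mem_neighborFinset v u).2 hvu), card_neighborFinset_eq_degree, hv])
  rw [Sym2.eq_swap] at h₂
  rw [hv] at h₁ h₃
  rw [hu] at h₂ h₄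
  calc _ ≤ #((G.incidenceFinset v).erase s(v, u)) + #((G.incidenceFinset u).erase s(v, u)) +
        #(G.farEdges v u) + #(G.farEdges u v) :=
        (card_union_le _ _).trans (Nat.add_le_add_right ((card_union_le _ _).trans
          (Nat.add_le_add_right (card_union_le _ _) _)) _)
    _ ≤ 12 := by omega

end Counting

end SimpleGraph

open SimpleGraph

theorem statement2 {V : Type*} [Fintype V] [DecidableEq V]
    (G : SimpleGraph V) [DecidableRel G.Adj]
    (hore : ∀ u v : V, G.Adj u v → G.degree u + G.degree v ≤ 7)
    (hG : ¬ G.HasStrongColoring 13)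
    (hmin : ∀ H : G.Subgraph, H ≠ ⊤ → H.coe.HasStrongColoring 13) :
    ∀ v : V, G.degree v = 4 →
      ((G.neighborFinset v).filter (fun u => G.degree u = 2)).card ≤ 2 := by
  intro v hv
  by_contra! hmany
  obtain ⟨u, hu⟩ := card_pos.1 (pos_of_gt hmany)
  obtain ⟨hvu, hu⟩ := mem_filter.1 hu
  have htwo : 2 ≤ #(((G.neighborFinset v).erase u).filter (G.degree · = 2)) := by
    rw [filter_erase, card_erase_of_mem (mem_filter.2 ⟨hvu, hu⟩)]
    omega
  rw [mem_neighborFinset] at hvu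
  obtain ⟨w, hw⟩ : ((G.neighborFinset u).erase v).Nonempty := by
    rw [← card_pos, card_erase_of_mem ((G.mem_neighborFinset u v).2 hvu.symm),
      card_neighborFinset_eq_degree, hu]
    norm_num
  obtain ⟨hwv, huw⟩ := mem_erase.1 hw
  rw [mem_neighborFinset] at huw
  have hNu := neighborFinset_erase_eq_singleton hu hvu.symm huw (Ne.symm hwv)
  obtain ⟨c₀, hc₀⟩ := exists_isStrongEdgeColoringOn_sdiff_incidenceSet hmin huw
  obtain ⟨c₁, hc₁⟩ := hc₀.exists_insert s(u, w) _
    (fun f hf => mem_of_sees_of_mem_sdiff_incidenceSet hf)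
    ((card_seen_by_far_edge_le hore hu huw hv hNu).trans_lt (by norm_num))
  obtain ⟨c₂, hc₂⟩ := hc₁.exists_insert s(v, u) _
    (fun f hf => mem_of_sees (hf.elim (· ▸ huw) (·.1)))
    ((card_seen_by_near_edge_le hore hu hvu hv htwo).trans_lt (by norm_num))
  exact hG ⟨c₂, hc₂.mono (edgeSet_subset_insert_sdiff_incidenceSet hNu)⟩
end

section
/- Let G be a finite simple graph with Ore-degree θ(G) ≤ 7, and let v be a vertex of G of degree 1. If the graph G − v obtained by deleting v admits a strong edge-coloring with 13 colors, then G admits a strong edge-coloring with 13 colors. -/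
lemma sees_symm {V : Type*} (G : SimpleGraph V) {e f : Sym2 V} (h : G.Sees e f) :
    G.Sees f e := by
  obtain ⟨a, ha, b, hb, hab⟩ := h
  exact ⟨b, hb, a, ha, by rcases hab with h | h; exact Or.inl h.symm; exact Or.inr h.symm⟩

theorem statement7 {V : Type*} [Fintype V] [DecidableEq V]
    (G : SimpleGraph V) [DecidableRel G.Adj]
    (hore : ∀ u v : V, G.Adj u v → G.degree u + G.degree v ≤ 7)
    (v : V) (hdeg : G.degree v = 1)
    (h : (((⊤ : G.Subgraph).deleteVerts {v}).coe).HasStrongColoring 13) :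
    G.HasStrongColoring 13 := by
  classical
  obtain ⟨c', hc'⟩ := h
  -- the unique neighbor of `v`
  obtain ⟨u, hNu⟩ : ∃ u, G.neighborFinset v = {u} := by
    rw [← Finset.card_eq_one, SimpleGraph.card_neighborFinset_eq_degree]; exact hdeg
  have hadj : G.Adj v u := by
    rw [← SimpleGraph.mem_neighborFinset, hNu]; exact Finset.mem_singleton_self u
  have huv : u ≠ v := fun h => (G.irrefl (h ▸ hadj)).elim
  -- every edge containing `v` is `s(u,v)`
  have hedge_v : ∀ e ∈ G.edgeSet, v ∈ e → e = s(u, v) := by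
    intro e he hv
    induction e with
    | h a b =>
      rw [SimpleGraph.mem_edgeSet] at he
      rcases Sym2.mem_iff.mp hv with hva | hvb
      · have hb : b ∈ G.neighborFinset v := by
          rw [SimpleGraph.mem_neighborFinset]; rw [hva]; exact he
        rw [hNu, Finset.mem_singleton] at hb
        rw [← hva, hb]; exact Sym2.eq_swap
      · have ha : a ∈ G.neighborFinset v := by
          rw [SimpleGraph.mem_neighborFinset]; rw [hvb]; exact he.symm
        rw [hNu, Finset.mem_singleton] at ha
        rw [← hvb, ha]
  have hmem : ∀ x : V, x ≠ v → x ∈ ((⊤ : G.Subgraph).deleteVerts {v}).verts := by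
    intro x hx; simp [hx]
  -- embedding of `V \ {v}` into the subtype
  let ι : V → ((⊤ : G.Subgraph).deleteVerts {v}).verts := fun x => if h : x = v then ⟨u, hmem u huv⟩ else ⟨x, hmem x h⟩
  have hι : ∀ x : V, x ≠ v → (ι x : V) = x := by
    intro x hx; simp [ι, hx]
  have hmapval : ∀ e : Sym2 V, v ∉ e → (e.map ι).map (Subtype.val) = e := by
    intro e hv
    induction e with
    | h a b =>
      have ha : a ≠ v := fun h => hv (h ▸ Sym2.mem_mk_left a b)
      have hb : b ≠ v := fun h => hv (h ▸ Sym2.mem_mk_right a b)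
      simp [Sym2.map_pair_eq, hι a ha, hι b hb]
  have hadj' : ∀ (a b : V), a ≠ v → b ≠ v → G.Adj a b →
      (((⊤ : G.Subgraph).deleteVerts {v}).coe).Adj (ι a) (ι b) := by
    intro a b ha hb hab
    have : ((((⊤ : G.Subgraph).deleteVerts {v}).coe)).Adj ⟨a, hmem a ha⟩ ⟨b, hmem b hb⟩ := by
      simp [SimpleGraph.Subgraph.coe_adj, ha, hb, hab]
    simpa [ι, ha, hb] using this
  have hmapedge : ∀ e ∈ G.edgeSet, v ∉ e →
      e.map ι ∈ (((⊤ : G.Subgraph).deleteVerts {v}).coe).edgeSet := by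
    intro e he hv
    induction e with
    | h a b =>
      have ha : a ≠ v := fun h => hv (h ▸ Sym2.mem_mk_left a b)
      have hb : b ≠ v := fun h => hv (h ▸ Sym2.mem_mk_right a b)
      rw [Sym2.map_pair_eq, SimpleGraph.mem_edgeSet]
      exact hadj' a b ha hb he
  -- the forbidden finset
  set F : Finset (Sym2 V) :=
    G.edgeFinset.filter (fun f => f ≠ s(u, v) ∧ G.Sees s(u, v) f) with hF
  have hd1 : 1 ≤ G.degree u := by
    rw [← SimpleGraph.card_neighborFinset_eq_degree]
    exact Finset.card_pos.mpr ⟨v, (SimpleGraph.mem_neighborFinset _ _ _).mpr hadj.symm⟩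
  have hd6 : G.degree u ≤ 6 := by
    have := hore u v hadj.symm; omega
  have hdegw : ∀ w ∈ G.neighborFinset u, G.degree w ≤ 7 - G.degree u := by
    intro w hw
    have := hore u w ((SimpleGraph.mem_neighborFinset _ _ _).mp hw)
    omega
  -- counting bound
  have hFcard : F.card ≤ 12 := by
    set B : Finset (Sym2 V) :=
      ((G.incidenceFinset u).erase s(u, v)) ∪
        ((G.neighborFinset u).erase v).biUnion
          (fun w => (G.incidenceFinset w).erase s(u, w)) with hB
    have hsub : F ⊆ B := by
      intro f hf
      rw [hF, Finset.mem_filter, SimpleGraph.mem_edgeFinset] at hf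
      obtain ⟨hfe, hfne, a, ha, b, hb, hab⟩ := hf
      have hvf : v ∉ f := fun hv => hfne (hedge_v f hfe hv)
      have hbv : b ≠ v := fun h => hvf (h ▸ hb)
      have hbu_or : b = u ∨ G.Adj u b := by
        rcases Sym2.mem_iff.mp ha with hau | hav
        · rcases hab with heq | hab
          · exact Or.inl (heq.symm.trans hau)
          · exact Or.inr (hau ▸ hab)
        · rcases hab with heq | hab
          · exact absurd (heq.symm.trans hav) hbv
          · have hb' : b ∈ G.neighborFinset v := by
              rw [SimpleGraph.mem_neighborFinset]; exact hav ▸ hab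
            rw [hNu, Finset.mem_singleton] at hb'
            exact Or.inl hb' 
      by_cases hu : u ∈ f
      · apply Finset.mem_union_left
        exact Finset.mem_erase.mpr ⟨hfne, (SimpleGraph.mem_incidenceFinset _ _ _).mpr ⟨hfe, hu⟩⟩
      · apply Finset.mem_union_right
        rcases hbu_or with rfl | hadjub
        · exact absurd hb hu
        · refine Finset.mem_biUnion.mpr ⟨b, ?_, ?_⟩
          · exact Finset.mem_erase.mpr ⟨hbv, (SimpleGraph.mem_neighborFinset _ _ _).mpr hadjub⟩
          · refine Finset.mem_erase.mpr ⟨?_, (SimpleGraph.mem_incidenceFinset _ _ _).mpr ⟨hfe, hb⟩⟩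
            intro hfe'
            exact hu (hfe' ▸ Sym2.mem_mk_left u b)
    have h1 : ((G.incidenceFinset u).erase s(u, v)).card = G.degree u - 1 := by
      rw [Finset.card_erase_of_mem, SimpleGraph.card_incidenceFinset_eq_degree]
      exact (SimpleGraph.mem_incidenceFinset _ _ _).mpr ⟨hadj.symm, Sym2.mem_mk_left u v⟩
    have h2 : ∀ w ∈ (G.neighborFinset u).erase v,
        ((G.incidenceFinset w).erase s(u, w)).card ≤ 6 - G.degree u := by
      intro w hw
      have hw' := Finset.mem_of_mem_erase hw
      have : ((G.incidenceFinset w).erase s(u, w)).card = G.degree w - 1 := by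
        rw [Finset.card_erase_of_mem, SimpleGraph.card_incidenceFinset_eq_degree]
        exact (SimpleGraph.mem_incidenceFinset _ _ _).mpr
          ⟨(SimpleGraph.mem_neighborFinset _ _ _).mp hw', Sym2.mem_mk_right u w⟩
      have := hdegw w hw'
      omega
    have h3 : ((G.neighborFinset u).erase v).card = G.degree u - 1 := by
      rw [Finset.card_erase_of_mem, SimpleGraph.card_neighborFinset_eq_degree]
      exact (SimpleGraph.mem_neighborFinset _ _ _).mpr hadj.symm
    have hb2 : (((G.neighborFinset u).erase v).biUnion
        (fun w => (G.incidenceFinset w).erase s(u, w))).card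
        ≤ (G.degree u - 1) * (6 - G.degree u) := by
      calc _ ≤ ∑ w ∈ (G.neighborFinset u).erase v,
            ((G.incidenceFinset w).erase s(u, w)).card := Finset.card_biUnion_le
        _ ≤ ∑ w ∈ (G.neighborFinset u).erase v, (6 - G.degree u) :=
            Finset.sum_le_sum h2
        _ = (G.degree u - 1) * (6 - G.degree u) := by rw [Finset.sum_const, h3, smul_eq_mul]
    have hcard : F.card ≤ (G.degree u - 1) + (G.degree u - 1) * (6 - G.degree u) := by
      calc F.card ≤ B.card := Finset.card_le_card hsub
        _ ≤ _ := by rw [hB]; exact le_trans (Finset.card_union_le _ _) (by rw [h1]; omega)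
    set d := G.degree u
    interval_cases d <;> omega
  -- choose a free color for `s(u,v)`
  have hex : ∃ k : Fin 13, k ∉ F.image (fun e => c' (e.map ι)) := by
    by_contra hk
    push_neg at hk
    have : (Finset.univ : Finset (Fin 13)) ⊆ F.image (fun e => c' (e.map ι)) :=
      fun k _ => hk k
    have := Finset.card_le_card this
    have hle := Finset.card_image_le (s := F) (f := fun e => c' (e.map ι))
    simp [Finset.card_univ] at this
    omega
  obtain ⟨k, hk⟩ := hex
  refine ⟨fun e => if e = s(u, v) then k else c' (e.map ι), ?_⟩
  intro e he f hf hef hsees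
  by_cases h1 : e = s(u, v) <;> by_cases h2 : f = s(u, v)
  · exact absurd (h1.trans h2.symm) hef
  · subst h1
    simp only [if_pos rfl, if_neg h2]
    intro hcc
    exact hk (Finset.mem_image.mpr ⟨f, by
      rw [hF, Finset.mem_filter, SimpleGraph.mem_edgeFinset]
      exact ⟨hf, h2, hsees⟩, hcc.symm⟩)
  · subst h2
    simp only [if_pos rfl, if_neg h1]
    intro hcc
    exact hk (Finset.mem_image.mpr ⟨e, by
      rw [hF, Finset.mem_filter, SimpleGraph.mem_edgeFinset]
      exact ⟨he, h1, sees_symm G hsees⟩, hcc⟩)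
  · simp only [if_neg h1, if_neg h2]
    have hve : v ∉ e := fun hv => h1 (hedge_v e he hv)
    have hvf : v ∉ f := fun hv => h2 (hedge_v f hf hv)
    apply hc' (e.map ι) (hmapedge e he hve) (f.map ι) (hmapedge f hf hvf)
    · intro hmeq
      apply hef
      rw [← hmapval e hve, ← hmapval f hvf, hmeq]
    · obtain ⟨a, ha, b, hb, hab⟩ := hsees
      have hav : a ≠ v := fun h => hve (h ▸ ha)
      have hbv : b ≠ v := fun h => hvf (h ▸ hb)
      refine ⟨ι a, Sym2.mem_map.mpr ⟨a, ha, rfl⟩, ι b, Sym2.mem_map.mpr ⟨b, hb, rfl⟩, ?_⟩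
      rcases hab with rfl | hab
      · exact Or.inl rfl
      · exact Or.inr (hadj' a b hav hbv hab)
end
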